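/- Convergence of the multi-level projected Newton method (Theorem 3.1, explicit form): adopt the setting of the noisy projected recursive Newton method, namely: real Hilbert spaces X, Y; Δk > 0 and k_n := k_l + nΔk for n = 0,…,N; closed subspaces X₀ ⊆ … ⊆ X_N of X with orthogonal projections P_n; F : X × ℝ → Y twice continuously Fréchet differentiable with ‖∂_rF‖ ≤ d₁, ‖∂_kF‖ ≤ d₂, ‖∂²_{rr}F‖ ≤ d₃, ‖∂²_{kr}F‖ ≤ d₄ everywhere; r̃_n ∈ X_n with F(r̃_n, k_n) = 0 and ‖r̃_{n+1} − r̃_n‖ ≤ d₀Δk for d₀ ≥ 1; noise vectors f_n ∈ Y with ‖f_n‖ ≤ δ̃; and ε with 0 < ε < 3/(2 + d₀), q := ε(1 + d₀)/3, b := ε(2 + d₀)/3, c₀(β) := 4ε/(3 d₃ (9 d₁ + √β)) for β > 0. Let 0 = n₀ < n₁ < … < n_M = N be a partition of the frequency indices into M sub-intervals, and for m = 1,…,M let σ̂_m > 0 satisfy ‖∂_rF(r̃_n, k_n)x‖ ≥ σ̂_m‖x‖ for all x ∈ X and all n with n_{m−1} ≤ n ≤ n_m. Let α₁ ≥ α₂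 ≥ … ≥ α_M ≥ α > 0 be regularization parameters with α_m ≤ εσ̂_m²/(3 − ε) for each m, and assume the step-size and noise conditions at the smallest parameter: (9d₁d₄/(4α))Δk ≤ ε/3, Δk(d₀ + d₂/(2√α)) ≤ (1/2)(1 − b)d₀c₀(α)α, and δ̃/(2√α) ≤ (1/2)(1 − b)d₀c₀(α)α. Run the Newton iteration with J inner iterations per frequency, using the regularization parameter α_m at every frequency of the m-th sub-interval: r⁰_{n+1} := r_n, r^{j+1}_{n+1} := r^j_{n+1} − P_{n+1} R_{α_m}(∂_rF(r^j_{n+1}, k_{n+1})) (F(r^j_{n+1}, k_{n+1}) + f_{n+1}) for n_{m−1} ≤ n < n_m, j = 0,…,J−1, and r_{n+1} := r^J_{n+1}. Then there exists a positive integer J₀ such that for every J ≥ J₀, if the starting approximation r₀ ∈ X₀ satisfies ‖r̃₀ − r₀‖ ≤ d₀c₀(α₁)α₁, then ‖r̃_{n_m} − r_{n_m}‖ ≤ d₀c₀(α_{m+1})α_{m+1} for every m = 1,…,M−1, and the final error satisfies ‖r̃_N − r_N‖ ≤ [δ̃/(2√α_M(1 − q)) + q^{J−1} Δk (d₀ +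 d₂/(2√α_M))] / (1 − q^{J−1}b) + (q^{J−1}b)^{N − n_{M−1}} · d₀c₀(α_M)α_M. -/

import Mathlib

/-!
Let `e = r̃ₙ - r` be the error of an iterate at the frequency `kₙ`. Since `F(r̃ₙ, kₙ) = 0`, one
projected regularized Newton step with parameter `β` turns it into `P (β B e - B A* R + B A* f)`,
where `A = ∂_rF(r, kₙ)`, `B = (β + A*A)⁻¹` and `R` is the Taylor remainder, `‖R‖ ≤ d₃ ‖e‖²`. The
lower bound `σ̂` on `∂_rF(r̃ₙ, kₙ)` survives at `r` up to `d₃ ‖e‖`, so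
`‖β B e‖ ≤ β ‖e‖ / (β + (σ̂ - d₃ ‖e‖)²)`, while `‖B A* y‖ ≤ ‖y‖ / (2√β)`. On the ball
`‖e‖ ≤ 3/2 · d₀ c₀(β) β` this makes every inner step a contraction with factor `q` up to the noise
term `δ̃ / (2√β)`, and the ball is invariant. Together with `‖r̃ₙ₊₁ - r̃ₙ‖ ≤ d₀ Δk`, the `J` inner
steps give the affine recursion `eₙ₊₁ ≤ qᴶ⁻¹ b eₙ + C` along the frequencies of a level, whose
solution is the stated bound. Since `β ↦ d₀ c₀(β) β` is increasing and the step-size and noise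
conditions are imposed at the smallest parameter `α`, a large `J` brings the error at the end of
every level below `d₀ c₀(α) α`, the starting accuracy the next level needs.
-/

open scoped RealInnerProductSpace InnerProduct

section OrthogonalProjection

variable {X : Type*} [NormedAddCommGroup X] [InnerProductSpace ℝ X] {S : Submodule ℝ X}
  {P : X →L[ℝ] X}

lemma norm_apply_le_of_sub_mem_orthogonal (hP : ∀ x, P x ∈ S ∧ x - P x ∈ Sᗮ) (x : X) :
    ‖P x‖ ≤ ‖x‖ := by
  have h := norm_add_sq_eq_norm_sq_add_norm_sq_real
    (Submodule.inner_right_of_mem_orthogonal (hP x).1 (hP x).2)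
  rw [add_sub_cancel] at h
  refine (pow_le_pow_iff_left₀ (norm_nonneg _) (norm_nonneg _) two_ne_zero).mp ?_
  nlinarith [mul_self_nonneg ‖x - P x‖]

lemma apply_eq_self_of_sub_mem_orthogonal (hP : ∀ x, P x ∈ S ∧ x - P x ∈ Sᗮ) {x : X} (hx : x ∈ S) :
    P x = x := by
  have h := Submodule.inner_right_of_mem_orthogonal (S.sub_mem hx (hP x).1) (hP x).2
  exact (sub_eq_zero.mp (inner_self_eq_zero.mp h)).symm

end OrthogonalProjection

section RegularizedInverse

variable {X Y : Type*} [NormedAddCommGroup X] [InnerProductSpace ℝ X] [CompleteSpace X]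
  [NormedAddCommGroup Y] [InnerProductSpace ℝ Y] [CompleteSpace Y]

/-- `B = (β I + A† A)⁻¹`, so that `B ∘L A†` is the regularized pseudoinverse `R_β(A)`. -/
def IsRegularizedInverse (β : ℝ) (A : X →L[ℝ] Y) (B : X →L[ℝ] X) : Prop :=
  B ∘L (β • (1 : X →L[ℝ] X) + A† ∘L A) = 1 ∧ (β • (1 : X →L[ℝ] X) + A† ∘L A) ∘L B = 1

namespace IsRegularizedInverse

variable {β : ℝ} {A : X →L[ℝ] Y} {B : X →L[ℝ] X}

lemma sub_apply_adjoint_apply (hB : IsRegularizedInverse β A B) (x : X) :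
    x - B ((A†) (A x)) = β • B x := by
  have h : β • B x + B ((A†) (A x)) = x := by simpa using congrArg (· x) hB.1
  exact sub_eq_iff_eq_add.mpr h.symm

lemma smul_norm_sq_add_norm_sq (hB : IsRegularizedInverse β A B) (x : X) :
    β * ‖B x‖ ^ 2 + ‖A (B x)‖ ^ 2 = ⟪x, B x⟫ := by
  have h : β • B x + (A†) (A (B x)) = x := by simpa using congrArg (· x) hB.2
  calc β * ‖B x‖ ^ 2 + ‖A (B x)‖ ^ 2 = ⟪β • B x + (A†) (A (B x)), B x⟫ := by
        rw [inner_add_left, real_inner_smul_left, ContinuousLinearMap.adjoint_inner_left,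
          real_inner_self_eq_norm_sq, real_inner_self_eq_norm_sq]
    _ = ⟪x, B x⟫ := by rw [h]

lemma norm_apply_adjoint_le (hB : IsRegularizedInverse β A B) (hβ : 0 < β) (y : Y) :
    ‖B ((A†) y)‖ ≤ ‖y‖ / (2 * √β) := by
  set x := B ((A†) y)
  have h := hB.smul_norm_sq_add_norm_sq ((A†) y)
  rw [ContinuousLinearMap.adjoint_inner_left] at h
  -- `β ‖x‖² = ⟪y, A x⟫ - ‖A x‖² ≤ ‖y‖ ‖A x‖ - ‖A x‖² ≤ ‖y‖² / 4`
  have hsq : (‖x‖ * (2 * √β)) ^ 2 ≤ ‖y‖ ^ 2 := by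
    rw [mul_pow, mul_pow, Real.sq_sqrt hβ.le]
    nlinarith [real_inner_le_norm y (A x), sq_nonneg (‖A x‖ - ‖y‖ / 2)]
  rw [le_div_iff₀ (by positivity)]
  exact (pow_le_pow_iff_left₀ (by positivity) (norm_nonneg _) two_ne_zero).mp hsq

lemma norm_apply_le_of_lowerBound (hB : IsRegularizedInverse β A B) (hβ : 0 < β) {s : ℝ}
    (hs : 0 ≤ s) (hA : ∀ x, s * ‖x‖ ≤ ‖A x‖) (x : X) : ‖B x‖ ≤ ‖x‖ / (β + s ^ 2) := by
  have h := hB.smul_norm_sq_add_norm_sq x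
  have hAB : (s * ‖B x‖) ^ 2 ≤ ‖A (B x)‖ ^ 2 := pow_le_pow_left₀ (by positivity) (hA _) 2
  have key : (β + s ^ 2) * ‖B x‖ ^ 2 ≤ ‖x‖ * ‖B x‖ := by
    nlinarith [real_inner_le_norm x (B x)]
  rw [le_div_iff₀ (by positivity)]
  rcases (norm_nonneg (B x)).eq_or_lt with h0 | h0
  · rw [← h0, zero_mul]; exact norm_nonneg x
  · nlinarith

end IsRegularizedInverse

end RegularizedInverse

section Calculus

variable {X Y : Type*} [NormedAddCommGroup X] [NormedSpace ℝ X]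
  [NormedAddCommGroup Y] [NormedSpace ℝ Y] {G : X → Y} {L : ℝ}

lemma norm_fderiv_sub_le_of_norm_fderiv_fderiv_le (hG : ContDiff ℝ 2 G)
    (hL : ∀ x, ‖fderiv ℝ (fderiv ℝ G) x‖ ≤ L) (x y : X) :
    ‖fderiv ℝ G y - fderiv ℝ G x‖ ≤ L * ‖y - x‖ :=
  Convex.norm_image_sub_le_of_norm_fderiv_le
    (fun _ _ => ((hG.fderiv_right le_rfl).differentiable one_ne_zero).differentiableAt)
    (fun z _ => hL z) convex_univ (Set.mem_univ x) (Set.mem_univ y)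

lemma norm_sub_sub_fderiv_le (hG : Differentiable ℝ G) (hL0 : 0 ≤ L)
    (hL : ∀ x y, ‖fderiv ℝ G y - fderiv ℝ G x‖ ≤ L * ‖y - x‖) (x y : X) :
    ‖G y - G x - fderiv ℝ G x (y - x)‖ ≤ L * ‖y - x‖ ^ 2 := by
  have h := Convex.norm_image_sub_le_of_norm_fderiv_le' (fun z _ => hG z)
    (fun z hz => (hL x z).trans (mul_le_mul_of_nonneg_left (norm_sub_le_of_mem_segment hz) hL0))
    (convex_segment x y) (left_mem_segment ℝ x y) (right_mem_segment ℝ x y)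
  rwa [mul_assoc, ← sq] at h

lemma sub_mul_norm_le_norm_fderiv_apply {σ : ℝ}
    (hL : ∀ x y, ‖fderiv ℝ G y - fderiv ℝ G x‖ ≤ L * ‖y - x‖) {x w : X}
    (hσ : ∀ v, σ * ‖v‖ ≤ ‖fderiv ℝ G x v‖) (v : X) :
    (σ - L * ‖x - w‖) * ‖v‖ ≤ ‖fderiv ℝ G w v‖ := by
  have h : ‖fderiv ℝ G x v - fderiv ℝ G w v‖ ≤ L * ‖x - w‖ * ‖v‖ :=
    ((fderiv ℝ G x - fderiv ℝ G w).le_opNorm v).trans (by gcongr; exact hL w x)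
  nlinarith [hσ v, norm_sub_norm_le (fderiv ℝ G x v) (fderiv ℝ G w v)]

end Calculus

section NewtonStep

variable {X Y : Type*} [NormedAddCommGroup X] [InnerProductSpace ℝ X] [CompleteSpace X]
  [NormedAddCommGroup Y] [InnerProductSpace ℝ Y] [CompleteSpace Y]

lemma norm_sub_newtonStep_le {G : X → Y} {L σ β : ℝ} {S : Submodule ℝ X} {P : X →L[ℝ] X}
    {A : X →L[ℝ] Y} {B : X →L[ℝ] X} {x w : X} (f : Y)
    (hG : Differentiable ℝ G) (hL0 : 0 ≤ L)
    (hL : ∀ x y, ‖fderiv ℝ G y - fderiv ℝ G x‖ ≤ L * ‖y - x‖)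
    (hP : ∀ x, P x ∈ S ∧ x - P x ∈ Sᗮ) (hx : x ∈ S) (hw : w ∈ S) (hGx : G x = 0)
    (hσ : ∀ v, σ * ‖v‖ ≤ ‖fderiv ℝ G x v‖) (hβ : 0 < β) (hA : A = fderiv ℝ G w)
    (hB : IsRegularizedInverse β A B) (hs : 0 ≤ σ - L * ‖x - w‖) :
    ‖x - (w - P ((B ∘L A†) (G w + f)))‖ ≤
      β / (β + (σ - L * ‖x - w‖) ^ 2) * ‖x - w‖ + L * ‖x - w‖ ^ 2 / (2 * √β)
        + ‖f‖ / (2 * √β) := by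
  set e := x - w
  have hR : ‖G x - G w - A e‖ ≤ L * ‖e‖ ^ 2 := hA ▸ norm_sub_sub_fderiv_le hG hL0 hL w x
  have hAlow : ∀ v, (σ - L * ‖e‖) * ‖v‖ ≤ ‖A v‖ := hA ▸ sub_mul_norm_le_norm_fderiv_apply hL hσ
  set R := G x - G w - A e
  -- uses `G x = 0` and `e - B A† A e = β B e`
  have hstep : x - (w - P ((B ∘L A†) (G w + f))) = P (β • B e - B ((A†) R) + B ((A†) f)) := by
    have hGw : G w = -A e - R := by simp only [R, hGx]; abel
    rw [← hB.sub_apply_adjoint_apply, ContinuousLinearMap.comp_apply, hGw]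
    have hPe : P e = e := apply_eq_self_of_sub_mem_orthogonal hP (S.sub_mem hx hw)
    simp only [map_add, map_sub, map_neg]
    rw [hPe]
    simp only [e]
    abel
  have h1 : ‖β • B e‖ ≤ β / (β + (σ - L * ‖e‖) ^ 2) * ‖e‖ := by
    rw [norm_smul, Real.norm_of_nonneg hβ.le, div_mul_eq_mul_div, mul_div_assoc]
    exact mul_le_mul_of_nonneg_left (hB.norm_apply_le_of_lowerBound hβ hs hAlow e) hβ.le
  have h2 : ‖B ((A†) R)‖ ≤ L * ‖e‖ ^ 2 / (2 * √β) :=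
    (hB.norm_apply_adjoint_le hβ R).trans (by gcongr)
  have h3 : ‖B ((A†) f)‖ ≤ ‖f‖ / (2 * √β) := hB.norm_apply_adjoint_le hβ f
  rw [hstep]
  refine (norm_apply_le_of_sub_mem_orthogonal hP _).trans ((norm_add_le _ _).trans ?_)
  linarith [norm_sub_le (β • B e) (B ((A†) R))]

end NewtonStep

/-- `d₀ c₀(β) β` with `c₀(β) = 4ε / (3 d₃ (9 d₁ + √β))`: the radius of the ball around `r̃ₙ`
in which the iterates at parameter `β` are kept. -/
noncomputable def newtonRadius (ε d₀ d₁ d₃ β : ℝ) : ℝ :=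
  d₀ * (4 * ε / (3 * d₃ * (9 * d₁ + √β))) * β

section NewtonRadius

variable {ε d₀ d₁ d₃ : ℝ}

lemma newtonRadius_pos (hε : 0 < ε) (hd₀ : 0 < d₀) (hd₁ : 0 < d₁) (hd₃ : 0 < d₃) {β : ℝ}
    (hβ : 0 < β) : 0 < newtonRadius ε d₀ d₁ d₃ β := by
  unfold newtonRadius; positivity

lemma newtonRadius_mono (hε : 0 ≤ ε) (hd₀ : 0 ≤ d₀) (hd₁ : 0 < d₁) (hd₃ : 0 < d₃) {β β' : ℝ}
    (hβ : 0 ≤ β) (hββ' : β ≤ β') : newtonRadius ε d₀ d₁ d₃ β ≤ newtonRadius ε d₀ d₁ d₃ β' := by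
  have hγ : √β ≤ √β' := Real.sqrt_le_sqrt hββ'
  have key : β / (9 * d₁ + √β) ≤ β' / (9 * d₁ + √β') := by
    rw [div_le_div_iff₀ (by positivity) (by positivity)]
    nlinarith [Real.sq_sqrt hβ, Real.sq_sqrt (hβ.trans hββ'), Real.sqrt_nonneg β,
      mul_le_mul_of_nonneg_left hγ (Real.sqrt_nonneg β)]
  have h : ∀ β, newtonRadius ε d₀ d₁ d₃ β = 4 * ε * d₀ / (3 * d₃) * (β / (9 * d₁ + √β)) := by
    intro β; unfold newtonRadius; field_simp
  rw [h, h]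
  gcongr

lemma mul_le_of_le_newtonRadius (hε : 0 ≤ ε) (hd₀ : 0 ≤ d₀) (hd₁ : 0 < d₁) (hd₃ : 0 < d₃)
    {β e : ℝ} (hβ : 0 < β) (hβd₁ : √β ≤ d₁) (he : e ≤ 3 / 2 * newtonRadius ε d₀ d₁ d₃ β) :
    d₃ * e ≤ ε * d₀ * √β / 5 := by
  have hγ : 0 < √β := Real.sqrt_pos.mpr hβ
  calc d₃ * e ≤ d₃ * (3 / 2 * newtonRadius ε d₀ d₁ d₃ β) := by gcongr
    _ = 2 * (ε * d₀) * √β ^ 2 / (9 * d₁ + √β) := by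
      unfold newtonRadius; rw [Real.sq_sqrt hβ.le]; field_simp; ring
    _ ≤ ε * d₀ * √β / 5 := by
      rw [div_le_div_iff₀ (by positivity) (by norm_num)]
      nlinarith [mul_nonneg (mul_nonneg hε hd₀) hγ.le]

end NewtonRadius

/-- The contraction estimate in the variables `t = ε d₀`, `γ = √β`, `u = d₃ ‖r̃ - r‖`. -/
lemma contraction_factor_le {ε t γ σ u : ℝ} (hε : 0 < ε) (hεt : ε ≤ t) (htε : t < 3 - 2 * ε)
    (hγ : 0 < γ) (hσ : 0 < σ) (hγσ : (3 - ε) * γ ^ 2 ≤ ε * σ ^ 2) (hut : u ≤ t * γ / 5) :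
    u < σ ∧ γ ^ 2 / (γ ^ 2 + (σ - u) ^ 2) + u / (2 * γ) ≤ (ε + t) / 3 := by
  have hε1 : ε < 1 := by linarith
  have hγσ' : γ < σ := by nlinarith
  refine ⟨by nlinarith, ?_⟩
  -- `(3 - ε) γ ≤ √(ε (3 - ε)) σ ≤ 3σ/2`
  have hγσ2 : (3 - ε) * γ ≤ 3 / 2 * σ := by
    nlinarith [sq_nonneg ((3 - ε) * γ - 3 / 2 * σ), sq_nonneg (3 / 2 - ε)]
  have hcross : 2 * (3 - ε) * u * σ ≤ 3 * t / 5 * σ ^ 2 := by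
    nlinarith [mul_le_mul_of_nonneg_right hγσ2 hσ.le, mul_le_mul_of_nonneg_right hut
      (by nlinarith : 0 ≤ 2 * (3 - ε) * σ)]
  have hden : (3 - ε) * γ ^ 2 * (3 - 3 * t / 5) ≤ ε * (3 - ε) * (γ ^ 2 + (σ - u) ^ 2) := by
    nlinarith [mul_le_mul_of_nonneg_right hγσ (by linarith : (0:ℝ) ≤ 3 - ε - 3 * t / 5),
      mul_nonneg (mul_nonneg hε.le (by linarith : (0:ℝ) ≤ 3 - ε)) (sq_nonneg u)]
  have h1 : γ ^ 2 / (γ ^ 2 + (σ - u) ^ 2) ≤ 5 * ε / (15 - 3 * t) := by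
    rw [div_le_div_iff₀ (by positivity) (by linarith)]
    nlinarith
  have h2 : 5 * ε / (15 - 3 * t) ≤ (10 * ε + 7 * t) / 30 := by
    rw [div_le_div_iff₀ (by linarith) (by norm_num)]
    nlinarith
  have h3 : u / (2 * γ) ≤ t / 10 := by
    rw [div_le_div_iff₀ (by positivity) (by norm_num)]
    linarith
  linarith

section AffineRecursion

variable {p : ℕ → Prop} {e : ℕ → ℝ} {a : ℝ}

lemma affine_recursion_le {C K : ℝ} {n₀ n₁ : ℕ} (hn : n₀ ≤ n₁) (ha0 : 0 ≤ a) (ha1 : a < 1)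
    (hC : 0 ≤ C) (hK : a * K + C ≤ K)
    (hstep : ∀ n, n₀ ≤ n → n < n₁ → p n → e n ≤ K → p (n + 1) ∧ e (n + 1) ≤ a * e n + C)
    (hp : p n₀) (he : e n₀ ≤ K) :
    p n₁ ∧ e n₁ ≤ K ∧ e n₁ ≤ a ^ (n₁ - n₀) * e n₀ + C / (1 - a) := by
  induction n₁, hn using Nat.le_induction with
  | base => simpa [hp, he] using div_nonneg hC (sub_nonneg.mpr ha1.le)
  | succ n hn ih =>
    obtain ⟨hpn, hKn, hen⟩ := ih fun i hi hin => hstep i hi (by omega)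
    obtain ⟨hpn', hen'⟩ := hstep n hn (by omega) hpn hKn
    refine ⟨hpn', by nlinarith, hen'.trans ?_⟩
    have h1a : 1 - a ≠ 0 := by linarith
    calc a * e n + C ≤ a * (a ^ (n - n₀) * e n₀ + C / (1 - a)) + C := by gcongr
      _ = a ^ (n + 1 - n₀) * e n₀ + C / (1 - a) := by
        rw [Nat.sub_add_comm hn, pow_succ]; field_simp; ring

lemma multilevel_recursion_le {M : ℕ} (hM : 1 ≤ M) {nseq : ℕ → ℕ}
    (hnseq : ∀ m, m < M → nseq m < nseq (m + 1)) {K C : ℕ → ℝ} (ha0 : 0 ≤ a) (ha1 : a < 1)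
    (hC : ∀ m, 1 ≤ m → m ≤ M → 0 ≤ C m) (hK : ∀ m, 1 ≤ m → m ≤ M → a * K m + C m ≤ K m)
    (hnext : ∀ m, 1 ≤ m → m < M → a * K m + C m / (1 - a) ≤ K (m + 1))
    (hstep : ∀ m, 1 ≤ m → m ≤ M → ∀ n, nseq (m - 1) ≤ n → n < nseq m → p n → e n ≤ K m →
      p (n + 1) ∧ e (n + 1) ≤ a * e n + C m)
    (hp : p (nseq 0)) (he : e (nseq 0) ≤ K 1) :
    (∀ m, 1 ≤ m → m < M → e (nseq m) ≤ K (m + 1)) ∧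
      e (nseq M) ≤ a ^ (nseq M - nseq (M - 1)) * K M + C M / (1 - a) := by
  have hlevel : ∀ m, 1 ≤ m → m ≤ M → p (nseq (m - 1)) → e (nseq (m - 1)) ≤ K m →
      p (nseq m) ∧ e (nseq m) ≤ a ^ (nseq m - nseq (m - 1)) * K m + C m / (1 - a) := by
    intro m hm1 hmM hpm hem
    have hlt := hnseq (m - 1) (by omega)
    rw [Nat.sub_add_cancel hm1] at hlt
    obtain ⟨hp', -, he'⟩ := affine_recursion_le hlt.le ha0 ha1 (hC m hm1 hmM) (hK m hm1 hmM)
      (hstep m hm1 hmM) hpm hem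
    exact ⟨hp', he'.trans (by gcongr)⟩
  have hentry : ∀ m, 1 ≤ m → m ≤ M → p (nseq (m - 1)) ∧ e (nseq (m - 1)) ≤ K m := by
    intro m hm1
    induction m, hm1 using Nat.le_induction with
    | base => exact fun _ => ⟨hp, he⟩
    | succ m hm1 ih =>
      intro hmM
      obtain ⟨hpm, hem⟩ := hlevel m hm1 (by omega) (ih (by omega)).1 (ih (by omega)).2
      have hK0 : 0 ≤ K m := by nlinarith [hK m hm1 (by omega), hC m hm1 (by omega)]
      -- `a ^ L * K m ≤ a * K m` because every level has length `L ≥ 1`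
      have hL : 1 ≤ nseq m - nseq (m - 1) := by
        have := hnseq (m - 1) (by omega); rw [Nat.sub_add_cancel hm1] at this; omega
      refine ⟨hpm, hem.trans ((add_le_add_left ?_ _).trans (hnext m hm1 (by omega)))⟩
      exact mul_le_mul_of_nonneg_right (pow_le_of_le_one ha0 ha1.le (by omega)) hK0
  obtain ⟨hpM, heM⟩ := hentry M hM le_rfl
  exact ⟨fun m hm1 hmM => by simpa using (hentry (m + 1) (by omega) hmM).2,
    (hlevel M hM le_rfl hpM heM).2⟩

end AffineRecursion

section NewtonIteration

variable {X Y : Type*} [NormedAddCommGroup X] [InnerProductSpace ℝ X] [CompleteSpace X]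
  [NormedAddCommGroup Y] [InnerProductSpace ℝ Y] [CompleteSpace Y]
  {G : X → Y} {S : Submodule ℝ X} {P : X →L[ℝ] X} {ε d₀ d₁ d₃ σ β q : ℝ}

lemma norm_sub_newtonStep_le_mul {A : X →L[ℝ] Y} {B : X →L[ℝ] X} {x w : X} (f : Y)
    (hq : q = ε * (1 + d₀) / 3) (hε : 0 < ε) (hεd₀ : ε * (2 + d₀) < 3) (hd₀ : 1 ≤ d₀)
    (hd₁ : 0 < d₁) (hd₃ : 0 < d₃) (hG : Differentiable ℝ G) (hGd₁ : ‖fderiv ℝ G x‖ ≤ d₁)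
    (hGd₃ : ∀ x y, ‖fderiv ℝ G y - fderiv ℝ G x‖ ≤ d₃ * ‖y - x‖)
    (hP : ∀ x, P x ∈ S ∧ x - P x ∈ Sᗮ) (hx : x ∈ S) (hw : w ∈ S) (hGx : G x = 0)
    (hσ0 : 0 < σ) (hσ : ∀ v, σ * ‖v‖ ≤ ‖fderiv ℝ G x v‖) (hβ : 0 < β)
    (hβσ : (3 - ε) * β ≤ ε * σ ^ 2) (hA : A = fderiv ℝ G w) (hB : IsRegularizedInverse β A B)
    (hxw : ‖x - w‖ ≤ 3 / 2 * newtonRadius ε d₀ d₁ d₃ β) :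
    ‖x - (w - P ((B ∘L A†) (G w + f)))‖ ≤ q * ‖x - w‖ + ‖f‖ / (2 * √β) := by
  rcases subsingleton_or_nontrivial X with hX | hX
  · rw [Subsingleton.elim (x - _) 0, Subsingleton.elim (x - w) 0, norm_zero, hq]; positivity
  have hσd₁ : σ ≤ d₁ := by
    obtain ⟨v, hv⟩ := exists_ne (0 : X)
    refine le_of_mul_le_mul_right ((hσ v).trans ?_) (norm_pos_iff.mpr hv)
    exact ((fderiv ℝ G x).le_opNorm v).trans (by gcongr)
  have hβd₁ : √β ≤ d₁ := by
    have hβσ' : β ≤ σ ^ 2 := by nlinarith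
    exact ((Real.sqrt_le_sqrt hβσ').trans_eq (Real.sqrt_sq hσ0.le)).trans hσd₁
  have hsqrt := Real.sq_sqrt hβ.le
  obtain ⟨hlt, hfactor⟩ := contraction_factor_le (t := ε * d₀) hε (by nlinarith) (by linarith)
    (Real.sqrt_pos.mpr hβ) hσ0 (by rwa [hsqrt])
    (mul_le_of_le_newtonRadius hε.le (by linarith) hd₁ hd₃ hβ hβd₁ hxw)
  rw [hsqrt] at hfactor
  calc _ ≤ _ := norm_sub_newtonStep_le f hG hd₃.le hGd₃ hP hx hw hGx hσ hβ hA hB (by linarith)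
    _ = (β / (β + (σ - d₃ * ‖x - w‖) ^ 2) + d₃ * ‖x - w‖ / (2 * √β)) * ‖x - w‖
        + ‖f‖ / (2 * √β) := by ring
    _ ≤ _ := by gcongr; linarith

lemma newtonIterate_mem_and_norm_sub_le {x : ℕ → X} {A : ℕ → X →L[ℝ] Y} {B : ℕ → X →L[ℝ] X}
    {J : ℕ} {rt : X} {f : Y} {δ : ℝ}
    (hq : q = ε * (1 + d₀) / 3) (hε : 0 < ε) (hεd₀ : ε * (2 + d₀) < 3) (hd₀ : 1 ≤ d₀)
    (hd₁ : 0 < d₁) (hd₃ : 0 < d₃) (hG : Differentiable ℝ G) (hGd₁ : ‖fderiv ℝ G rt‖ ≤ d₁)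
    (hGd₃ : ∀ x y, ‖fderiv ℝ G y - fderiv ℝ G x‖ ≤ d₃ * ‖y - x‖)
    (hP : ∀ x, P x ∈ S ∧ x - P x ∈ Sᗮ) (hrt : rt ∈ S) (hGrt : G rt = 0)
    (hσ0 : 0 < σ) (hσ : ∀ v, σ * ‖v‖ ≤ ‖fderiv ℝ G rt v‖) (hβ : 0 < β)
    (hβσ : (3 - ε) * β ≤ ε * σ ^ 2)
    (hA : ∀ j < J, A j = fderiv ℝ G (x j)) (hB : ∀ j < J, IsRegularizedInverse β (A j) (B j))
    (hx : ∀ j < J, x (j + 1) = x j - P ((B j ∘L (A j)†) (G (x j) + f)))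
    (hf : ‖f‖ ≤ δ) (hδ : δ / (2 * √β) ≤ 3 / 2 * (1 - q) * newtonRadius ε d₀ d₁ d₃ β)
    (hx0 : x 0 ∈ S) (he0 : ‖rt - x 0‖ ≤ 3 / 2 * newtonRadius ε d₀ d₁ d₃ β) :
    x J ∈ S ∧ ‖rt - x J‖ ≤ q ^ J * ‖rt - x 0‖ + δ / (2 * √β * (1 - q)) := by
  have hδ0 : 0 ≤ δ := (norm_nonneg f).trans hf
  have hq0 : 0 ≤ q := by rw [hq]; positivity
  have hq1 : q < 1 := by rw [hq]; nlinarith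
  have hstep : ∀ j, 0 ≤ j → j < J → x j ∈ S → ‖rt - x j‖ ≤ 3 / 2 * newtonRadius ε d₀ d₁ d₃ β →
      x (j + 1) ∈ S ∧ ‖rt - x (j + 1)‖ ≤ q * ‖rt - x j‖ + δ / (2 * √β) := by
    intro j _ hj hxj hej
    rw [hx j hj]
    refine ⟨S.sub_mem hxj (hP _).1, ?_⟩
    refine (norm_sub_newtonStep_le_mul f hq hε hεd₀ hd₀ hd₁ hd₃ hG hGd₁ hGd₃ hP hrt hxj hGrt
      hσ0 hσ hβ hβσ (hA j hj) (hB j hj) hej).trans ?_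
    gcongr
  obtain ⟨hxJ, -, heJ⟩ := affine_recursion_le (p := fun j => x j ∈ S) (e := fun j => ‖rt - x j‖)
    (Nat.zero_le J) hq0 hq1 (by positivity) (by linarith) hstep hx0 he0
  rw [div_div, Nat.sub_zero] at heJ
  exact ⟨hxJ, heJ⟩

end NewtonIteration

structure StepSizeConditions (ε d₀ d₁ d₂ d₃ Δk δ α q b : ℝ) : Prop where
  q_eq : q = ε * (1 + d₀) / 3
  b_eq : b = ε * (2 + d₀) / 3
  ε_pos : 0 < ε
  ε_lt : ε * (2 + d₀) < 3
  one_le_d₀ : 1 ≤ d₀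
  d₁_pos : 0 < d₁
  d₂_nonneg : 0 ≤ d₂
  d₃_pos : 0 < d₃
  Δk_nonneg : 0 ≤ Δk
  δ_nonneg : 0 ≤ δ
  α_pos : 0 < α
  step_le : Δk * (d₀ + d₂ / (2 * √α)) ≤ 1 / 2 * (1 - b) * newtonRadius ε d₀ d₁ d₃ α
  noise_le : δ / (2 * √α) ≤ 1 / 2 * (1 - b) * newtonRadius ε d₀ d₁ d₃ α

/-- The additive term of the affine error recursion `eₙ₊₁ ≤ qᴶ⁻¹ b eₙ + C` at a frequency with
regularization parameter `β` and `J` inner Newton iterations. -/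
noncomputable def errorIncrement (q d₀ d₂ Δk δ : ℝ) (J : ℕ) (β : ℝ) : ℝ :=
  q ^ (J - 1) * Δk * (d₀ + d₂ / (2 * √β)) + δ / (2 * √β * (1 - q))

lemma pow_mul_add_le {q b e s t : ℝ} {J : ℕ} (hJ : 1 ≤ J) (hq0 : 0 ≤ q) (hqb : q ≤ b)
    (hq1 : q ≤ 1) (he : 0 ≤ e) (hs : 0 ≤ s) (hst : s ≤ t) :
    q ^ J * (e + s) ≤ q ^ (J - 1) * b * e + q ^ (J - 1) * t := by
  have hqJ : q ^ J = q ^ (J - 1) * q := by rw [← pow_succ, Nat.sub_add_cancel hJ]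
  have hpow : 0 ≤ q ^ (J - 1) := pow_nonneg hq0 _
  rw [hqJ]
  nlinarith [mul_le_mul_of_nonneg_left hqb hpow, mul_le_mul_of_nonneg_left hq1 hpow,
    mul_nonneg hpow (mul_nonneg (sub_nonneg.mpr hqb) he), mul_nonneg hpow (sub_nonneg.mpr hst),
    mul_nonneg (mul_nonneg hpow (sub_nonneg.mpr hq1)) hs]

lemma affine_level_bounds {a C Eα Eβ E₁ : ℝ} (ha0 : 0 ≤ a) (ha : a ≤ 1 / 4)
    (hC : C ≤ 5 / 8 * Eα) (hEα : 0 ≤ Eα) (hαβ : Eα ≤ Eβ) (hβ₁ : Eβ ≤ E₁)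
    (haE₁ : a * E₁ ≤ Eα / 12) :
    a * Eβ + C ≤ Eβ ∧ a * Eβ + C / (1 - a) ≤ Eα := by
  refine ⟨by nlinarith, ?_⟩
  have h1 : C / (1 - a) ≤ 5 / 6 * Eα := by
    rw [div_le_iff₀ (by linarith)]; nlinarith
  nlinarith [mul_le_mul_of_nonneg_left hβ₁ ha0]

lemma exists_pow_sub_one_le {q c : ℝ} (hq0 : 0 ≤ q) (hq1 : q < 1) (hc : 0 < c) :
    ∃ J₀ : ℕ, 0 < J₀ ∧ ∀ J, J₀ ≤ J → q ^ (J - 1) ≤ c := by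
  obtain ⟨n, hn⟩ := Filter.eventually_atTop.mp
    ((tendsto_pow_atTop_nhds_zero_of_lt_one hq0 hq1).eventually (ge_mem_nhds hc))
  exact ⟨n + 1, n.succ_pos, fun J hJ => hn (J - 1) (by omega)⟩

namespace StepSizeConditions

variable {ε d₀ d₁ d₂ d₃ Δk δ α q b β : ℝ} (hc : StepSizeConditions ε d₀ d₁ d₂ d₃ Δk δ α q b)
include hc

lemma d₀_pos : 0 < d₀ := by linarith [hc.one_le_d₀]

lemma ε_lt_one : ε < 1 := by nlinarith [hc.ε_pos, hc.ε_lt, hc.one_le_d₀]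

lemma q_nonneg : 0 ≤ q := by rw [hc.q_eq]; nlinarith [hc.ε_pos, hc.one_le_d₀]

lemma b_pos : 0 < b := by rw [hc.b_eq]; nlinarith [hc.ε_pos, hc.one_le_d₀]

lemma q_le_b : q ≤ b := by rw [hc.q_eq, hc.b_eq]; linarith [hc.ε_pos]

lemma b_lt_one : b < 1 := by rw [hc.b_eq]; linarith [hc.ε_lt]

lemma q_lt_one : q < 1 := hc.q_le_b.trans_lt hc.b_lt_one

lemma newtonRadius_pos_of_le (hαβ : α ≤ β) : 0 < newtonRadius ε d₀ d₁ d₃ β :=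
  newtonRadius_pos hc.ε_pos hc.d₀_pos hc.d₁_pos hc.d₃_pos (hc.α_pos.trans_le hαβ)

lemma newtonRadius_mono_of_le {β' : ℝ} (hαβ : α ≤ β) (hββ' : β ≤ β') :
    newtonRadius ε d₀ d₁ d₃ β ≤ newtonRadius ε d₀ d₁ d₃ β' :=
  newtonRadius_mono hc.ε_pos.le hc.d₀_pos.le hc.d₁_pos hc.d₃_pos (hc.α_pos.le.trans hαβ) hββ'

lemma add_le_three_halves_newtonRadius (hαβ : α ≤ β) {e : ℝ}
    (he : e ≤ newtonRadius ε d₀ d₁ d₃ β) :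
    e + d₀ * Δk ≤ 3 / 2 * newtonRadius ε d₀ d₁ d₃ β := by
  have hEα := hc.newtonRadius_pos_of_le le_rfl
  have hEαβ := hc.newtonRadius_mono_of_le le_rfl hαβ
  have := hc.step_le
  have : 0 ≤ Δk * (d₂ / (2 * √α)) := by have := hc.Δk_nonneg; have := hc.d₂_nonneg; positivity
  nlinarith [mul_pos hc.b_pos hEα]

lemma noise_le_three_halves_newtonRadius (hαβ : α ≤ β) :
    δ / (2 * √β) ≤ 3 / 2 * (1 - q) * newtonRadius ε d₀ d₁ d₃ β := by
  have hEα := hc.newtonRadius_pos_of_le le_rfl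
  have hEαβ := hc.newtonRadius_mono_of_le le_rfl hαβ
  have hsqrt : δ / (2 * √β) ≤ δ / (2 * √α) := by
    have := hc.δ_nonneg; have := hc.α_pos; gcongr
  nlinarith [hc.noise_le, hc.b_lt_one, hc.q_le_b, mul_pos hc.b_pos hEα]

lemma errorIncrement_nonneg (J : ℕ) : 0 ≤ errorIncrement q d₀ d₂ Δk δ J β := by
  have := hc.q_nonneg; have := hc.d₀_pos; have := hc.d₂_nonneg; have := hc.Δk_nonneg
  have := hc.δ_nonneg; have : 0 < 1 - q := by linarith [hc.q_lt_one]
  unfold errorIncrement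
  positivity

lemma errorIncrement_le (hαβ : α ≤ β) {J : ℕ} (hJ : q ^ (J - 1) ≤ 1 / 4) :
    errorIncrement q d₀ d₂ Δk δ J β ≤ 5 / 8 * newtonRadius ε d₀ d₁ d₃ α := by
  have hEα := hc.newtonRadius_pos_of_le le_rfl
  have hbE := mul_pos hc.b_pos hEα
  have hα := hc.α_pos
  have hΔk := hc.Δk_nonneg
  have hd₂ := hc.d₂_nonneg
  have h1 : q ^ (J - 1) * Δk * (d₀ + d₂ / (2 * √β)) ≤ 1 / 8 * newtonRadius ε d₀ d₁ d₃ α := by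
    have := hc.d₀_pos
    have : Δk * (d₀ + d₂ / (2 * √β)) ≤ Δk * (d₀ + d₂ / (2 * √α)) := by gcongr
    calc q ^ (J - 1) * Δk * (d₀ + d₂ / (2 * √β))
        = q ^ (J - 1) * (Δk * (d₀ + d₂ / (2 * √β))) := by ring
      _ ≤ 1 / 4 * (1 / 2 * (1 - b) * newtonRadius ε d₀ d₁ d₃ α) :=
        mul_le_mul hJ (this.trans hc.step_le) (by positivity) (by norm_num)
      _ ≤ _ := by linarith
  have h2 : δ / (2 * √β * (1 - q)) ≤ 1 / 2 * newtonRadius ε d₀ d₁ d₃ α := by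
    have hq1 : 0 < 1 - q := by linarith [hc.q_lt_one]
    rw [← div_div, div_le_iff₀ hq1]
    have : δ / (2 * √β) ≤ δ / (2 * √α) := by have := hc.δ_nonneg; gcongr
    nlinarith [hc.noise_le, hc.q_le_b]
  unfold errorIncrement
  linarith

lemma exists_innerIterations {β₁ : ℝ} (hαβ₁ : α ≤ β₁) :
    ∃ J₀ : ℕ, 0 < J₀ ∧ ∀ J, J₀ ≤ J → 0 ≤ q ^ (J - 1) * b ∧ q ^ (J - 1) * b < 1 ∧
      ∀ β, α ≤ β → β ≤ β₁ →
        q ^ (J - 1) * b * newtonRadius ε d₀ d₁ d₃ β + errorIncrement q d₀ d₂ Δk δ J β ≤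
          newtonRadius ε d₀ d₁ d₃ β ∧
        q ^ (J - 1) * b * newtonRadius ε d₀ d₁ d₃ β +
          errorIncrement q d₀ d₂ Δk δ J β / (1 - q ^ (J - 1) * b) ≤ newtonRadius ε d₀ d₁ d₃ α := by
  have hq0 := hc.q_nonneg
  have hb0 := hc.b_pos
  have hEα := hc.newtonRadius_pos_of_le le_rfl
  have hE₁ := hc.newtonRadius_pos_of_le hαβ₁
  obtain ⟨J₀, hJ₀, hJ⟩ := exists_pow_sub_one_le hq0 hc.q_lt_one
    (lt_min (by norm_num : (0 : ℝ) < 1 / 4) (by positivity :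
      0 < newtonRadius ε d₀ d₁ d₃ α / (12 * b * newtonRadius ε d₀ d₁ d₃ β₁)))
  refine ⟨J₀, hJ₀, fun J hJJ₀ => ?_⟩
  obtain ⟨hc14, hcE⟩ := le_min_iff.mp (hJ J hJJ₀)
  rw [le_div_iff₀ (by positivity)] at hcE
  have ha : q ^ (J - 1) * b ≤ 1 / 4 := by nlinarith [hc.b_lt_one]
  refine ⟨by positivity, by linarith, fun β hαβ hββ₁ => affine_level_bounds (by positivity) ha
    (hc.errorIncrement_le hαβ hc14) hEα.le (hc.newtonRadius_mono_of_le le_rfl hαβ)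
    (hc.newtonRadius_mono_of_le hαβ hββ₁) (by linarith)⟩

end StepSizeConditions

section NewtonFrequencyStep

variable {X Y : Type*} [NormedAddCommGroup X] [InnerProductSpace ℝ X] [CompleteSpace X]
  [NormedAddCommGroup Y] [InnerProductSpace ℝ Y] [CompleteSpace Y]

lemma frequencyStep_mem_and_norm_sub_le {G : X → Y} {S : Submodule ℝ X} {P : X →L[ℝ] X}
    {x : ℕ → X} {A : ℕ → X →L[ℝ] Y} {B : ℕ → X →L[ℝ] X} {J : ℕ} {rt rt' r : X} {f : Y}
    {ε d₀ d₁ d₂ d₃ Δk δ α q b β σ : ℝ} (hc : StepSizeConditions ε d₀ d₁ d₂ d₃ Δk δ α q b)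
    (hαβ : α ≤ β) (hσ0 : 0 < σ) (hβσ : β ≤ ε * σ ^ 2 / (3 - ε))
    (hG : ContDiff ℝ 2 G) (hGd₁ : ‖fderiv ℝ G rt‖ ≤ d₁)
    (hGd₃ : ∀ x, ‖fderiv ℝ (fderiv ℝ G) x‖ ≤ d₃) (hGrt : G rt = 0)
    (hσ : ∀ v, σ * ‖v‖ ≤ ‖fderiv ℝ G rt v‖) (hP : ∀ x, P x ∈ S ∧ x - P x ∈ Sᗮ) (hrt : rt ∈ S)
    (hf : ‖f‖ ≤ δ) (hJ : 1 ≤ J) (hA : ∀ j < J, A j = fderiv ℝ G (x j))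
    (hB : ∀ j < J, IsRegularizedInverse β (A j) (B j))
    (hx : ∀ j < J, x (j + 1) = x j - P ((B j ∘L (A j)†) (G (x j) + f)))
    (hx0 : x 0 = r) (hr : r ∈ S) (hrt' : ‖rt - rt'‖ ≤ d₀ * Δk)
    (he : ‖rt' - r‖ ≤ newtonRadius ε d₀ d₁ d₃ β) :
    x J ∈ S ∧ ‖rt - x J‖ ≤ q ^ (J - 1) * b * ‖rt' - r‖ + errorIncrement q d₀ d₂ Δk δ J β := by
  have hrtr : ‖rt - r‖ ≤ ‖rt' - r‖ + d₀ * Δk := by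
    linarith [norm_sub_le_norm_sub_add_norm_sub rt rt' r]
  have hβσ' : (3 - ε) * β ≤ ε * σ ^ 2 := by
    rwa [le_div_iff₀ (by linarith [hc.ε_lt_one]), mul_comm] at hβσ
  obtain ⟨hxJ, heJ⟩ := newtonIterate_mem_and_norm_sub_le hc.q_eq hc.ε_pos hc.ε_lt hc.one_le_d₀
    hc.d₁_pos hc.d₃_pos (hG.differentiable (by norm_num)) hGd₁
    (norm_fderiv_sub_le_of_norm_fderiv_fderiv_le hG hGd₃) hP hrt hGrt hσ0 hσ
    (hc.α_pos.trans_le hαβ) hβσ' hA hB hx hf (hc.noise_le_three_halves_newtonRadius hαβ)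
    (hx0 ▸ hr) (hx0 ▸ hrtr.trans (hc.add_le_three_halves_newtonRadius hαβ he))
  refine ⟨hxJ, heJ.trans ?_⟩
  have hΔk' : d₀ * Δk ≤ Δk * (d₀ + d₂ / (2 * √β)) := by
    have := hc.Δk_nonneg; have := hc.d₂_nonneg
    have : 0 ≤ Δk * (d₂ / (2 * √β)) := by positivity
    linarith
  have key := pow_mul_add_le hJ hc.q_nonneg hc.q_le_b hc.q_lt_one.le (norm_nonneg (rt' - r))
    (mul_nonneg hc.d₀_pos.le hc.Δk_nonneg) hΔk'
  rw [hx0, errorIncrement]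
  calc _ ≤ q ^ J * (‖rt' - r‖ + d₀ * Δk) + δ / (2 * √β * (1 - q)) := by
        have := hc.q_nonneg; gcongr
    _ ≤ _ := by linarith

end NewtonFrequencyStep

theorem stmt_17_general {X Y : Type*}
    [NormedAddCommGroup X] [InnerProductSpace ℝ X] [CompleteSpace X]
    [NormedAddCommGroup Y] [InnerProductSpace ℝ Y] [CompleteSpace Y]
    (N M : ℕ) (hM : 1 ≤ M)
    (Δk : ℝ) (hΔk : 0 < Δk)
    (k : ℕ → ℝ)
    (Xs : ℕ → Submodule ℝ X)
    (hXsmono : ∀ n, n < N → Xs n ≤ Xs (n + 1))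
    (P : ℕ → X →L[ℝ] X)
    (hP : ∀ n, n ≤ N → ∀ x : X, P n x ∈ Xs n ∧ x - P n x ∈ (Xs n)ᗮ)
    (F : X × ℝ → Y) (hF : ContDiff ℝ 2 F)
    (d₀ d₁ d₂ d₃ : ℝ) (hd₀ : 1 ≤ d₀) (hd₁ : 0 < d₁) (hd₂ : 0 < d₂)
    (hd₃ : 0 < d₃)
    (hFr : ∀ (r : X) (κ : ℝ), ‖fderiv ℝ (fun r' => F (r', κ)) r‖ ≤ d₁)
    (hFrr : ∀ (r : X) (κ : ℝ),
      ‖fderiv ℝ (fun r' => fderiv ℝ (fun r'' => F (r'', κ)) r') r‖ ≤ d₃)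
    (rt : ℕ → X)
    (hrtmem : ∀ n, n ≤ N → rt n ∈ Xs n)
    (hrtzero : ∀ n, n ≤ N → F (rt n, k n) = 0)
    (hrtstep : ∀ n, n < N → ‖rt (n + 1) - rt n‖ ≤ d₀ * Δk)
    (δt : ℝ) (hδt : 0 ≤ δt)
    (f : ℕ → Y) (hf : ∀ n, 1 ≤ n → n ≤ N → ‖f n‖ ≤ δt)
    (ε : ℝ) (hε0 : 0 < ε) (hε1 : ε < 3 / (2 + d₀))
    (q b : ℝ) (hqdef : q = ε * (1 + d₀) / 3) (hbdef : b = ε * (2 + d₀) / 3)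
    (c₀ : ℝ → ℝ) (hc₀ : ∀ β : ℝ, c₀ β = 4 * ε / (3 * d₃ * (9 * d₁ + Real.sqrt β)))
    -- the partition of the frequency indices into `M` sub-intervals
    (nseq : ℕ → ℕ) (hnseq0 : nseq 0 = 0) (hnseqM : nseq M = N)
    (hnseqmono : ∀ m, m < M → nseq m < nseq (m + 1))
    -- lower bounds of the singular values on each sub-interval
    (σh : ℕ → ℝ) (hσh : ∀ m, 1 ≤ m → m ≤ M → 0 < σh m)
    (hlow : ∀ m, 1 ≤ m → m ≤ M → ∀ n, nseq (m - 1) ≤ n → n ≤ nseq m → ∀ x : X,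
      σh m * ‖x‖ ≤ ‖fderiv ℝ (fun r' => F (r', k n)) (rt n) x‖)
    -- the regularization parameters
    (αs : ℕ → ℝ) (α : ℝ) (hα : 0 < α) (hααsM : α ≤ αs M)
    (hαsmono : ∀ m, 1 ≤ m → m < M → αs (m + 1) ≤ αs m)
    (hαsle : ∀ m, 1 ≤ m → m ≤ M → αs m ≤ ε * σh m ^ 2 / (3 - ε))
    -- step-size and noise conditions at the smallest parameter
    (hstep2 : Δk * (d₀ + d₂ / (2 * Real.sqrt α)) ≤
      1 / 2 * (1 - b) * d₀ * c₀ α * α)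
    (hstep3 : δt / (2 * Real.sqrt α) ≤ 1 / 2 * (1 - b) * d₀ * c₀ α * α) :
    ∃ J₀ : ℕ, 0 < J₀ ∧ ∀ J : ℕ, J₀ ≤ J →
      ∀ (r : ℕ → X) (rr : ℕ → ℕ → X)
        (A : ℕ → ℕ → X →L[ℝ] Y) (B : ℕ → ℕ → X →L[ℝ] X),
      (∀ n, n < N → ∀ j, j < J →
        A n j = fderiv ℝ (fun r' => F (r', k (n + 1))) (rr n j)) →
      (∀ m, 1 ≤ m → m ≤ M → ∀ n, nseq (m - 1) ≤ n → n < nseq m → ∀ j, j < J →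
        B n j ∘L (αs m • (1 : X →L[ℝ] X) +
          ContinuousLinearMap.adjoint (A n j) ∘L A n j) = 1 ∧
        (αs m • (1 : X →L[ℝ] X) +
          ContinuousLinearMap.adjoint (A n j) ∘L A n j) ∘L B n j = 1) →
      (∀ n, n < N → rr n 0 = r n) →
      (∀ m, 1 ≤ m → m ≤ M → ∀ n, nseq (m - 1) ≤ n → n < nseq m → ∀ j, j < J →
        rr n (j + 1) = rr n j - P (n + 1)
          ((B n j ∘L ContinuousLinearMap.adjoint (A n j))
            (F (rr n j, k (n + 1)) + f (n + 1)))) →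
      (∀ n, n < N → r (n + 1) = rr n J) →
      r 0 ∈ Xs 0 →
      ‖rt 0 - r 0‖ ≤ d₀ * c₀ (αs 1) * αs 1 →
      (∀ m, 1 ≤ m → m ≤ M - 1 →
        ‖rt (nseq m) - r (nseq m)‖ ≤ d₀ * c₀ (αs (m + 1)) * αs (m + 1)) ∧
      ‖rt N - r N‖ ≤
        (δt / (2 * Real.sqrt (αs M) * (1 - q)) +
          q ^ (J - 1) * Δk * (d₀ + d₂ / (2 * Real.sqrt (αs M)))) /
          (1 - q ^ (J - 1) * b) +
        (q ^ (J - 1) * b) ^ (N - nseq (M - 1)) * (d₀ * c₀ (αs M) * αs M) := by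
  have hE : ∀ β, d₀ * c₀ β * β = newtonRadius ε d₀ d₁ d₃ β := fun β => by rw [hc₀]; rfl
  have hc : StepSizeConditions ε d₀ d₁ d₂ d₃ Δk δt α q b :=
    ⟨hqdef, hbdef, hε0, by rwa [lt_div_iff₀ (by linarith)] at hε1, hd₀, hd₁, hd₂.le, hd₃, hΔk.le,
      hδt, hα, hstep2.trans_eq (by rw [← hE]; ring), hstep3.trans_eq (by rw [← hE]; ring)⟩
  have hαs : ∀ m, 1 ≤ m → m ≤ M → α ≤ αs m ∧ αs m ≤ αs 1 := by
    have h : AntitoneOn αs (Set.Icc 1 M) := antitoneOn_of_succ_le Set.ordConnected_Icc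
      fun m _ hm hm' => hαsmono m hm.1 (by simp at hm'; omega)
    exact fun m hm1 hmM => ⟨hααsM.trans (h ⟨hm1, hmM⟩ ⟨hM, le_rfl⟩ hmM),
      h ⟨le_rfl, hM⟩ ⟨hm1, hmM⟩ hm1⟩
  have hnseqN : ∀ m, m ≤ M → nseq m ≤ N := fun m hm => hnseqM ▸
    (strictMonoOn_Iic_of_lt_succ fun m hm => by simpa using hnseqmono m hm).monotoneOn
      hm le_rfl hm
  obtain ⟨J₀, hJ₀, hJ⟩ := hc.exists_innerIterations (hαs 1 le_rfl hM).1
  refine ⟨J₀, hJ₀, fun J hJJ₀ r rr A B hA hB hrr0 hupd hrJ hr0 he0 => ?_⟩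
  obtain ⟨ha0, ha1, hlevel⟩ := hJ J hJJ₀
  have hfreq : ∀ m, 1 ≤ m → m ≤ M → ∀ n, nseq (m - 1) ≤ n → n < nseq m → r n ∈ Xs n →
      ‖rt n - r n‖ ≤ newtonRadius ε d₀ d₁ d₃ (αs m) → r (n + 1) ∈ Xs (n + 1) ∧
        ‖rt (n + 1) - r (n + 1)‖ ≤
          q ^ (J - 1) * b * ‖rt n - r n‖ + errorIncrement q d₀ d₂ Δk δt J (αs m) := by
    intro m hm1 hmM n hn0 hn1 hrn hen
    have hnN : n < N := hn1.trans_le (hnseqN m hmM)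
    rw [hrJ n hnN]
    exact frequencyStep_mem_and_norm_sub_le (G := fun r' => F (r', k (n + 1))) hc (hαs m hm1 hmM).1
      (hσh m hm1 hmM) (hαsle m hm1 hmM) (hF.comp (contDiff_id.prodMk contDiff_const))
      (hFr _ _) (fun x => hFrr x _) (hrtzero _ hnN) (hlow m hm1 hmM (n + 1) (by omega) hn1)
      (hP _ hnN) (hrtmem _ hnN) (hf _ (by omega) hnN) (hJ₀.trans_le hJJ₀) (hA n hnN)
      (hB m hm1 hmM n hn0 hn1) (hupd m hm1 hmM n hn0 hn1) (hrr0 n hnN) (hXsmono n hnN hrn)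
      (hrtstep n hnN) hen
  obtain ⟨hmid, hlast⟩ := multilevel_recursion_le (p := fun n => r n ∈ Xs n)
    (e := fun n => ‖rt n - r n‖) (K := fun m => newtonRadius ε d₀ d₁ d₃ (αs m)) hM hnseqmono
    ha0 ha1 (fun m _ _ => hc.errorIncrement_nonneg J)
    (fun m hm1 hmM => (hlevel _ (hαs m hm1 hmM).1 (hαs m hm1 hmM).2).1)
    (fun m hm1 hmM => (hlevel _ (hαs m hm1 hmM.le).1 (hαs m hm1 hmM.le).2).2.trans
      (hc.newtonRadius_mono_of_le le_rfl (hαs (m + 1) (by omega) hmM).1))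
    hfreq (by rw [hnseq0]; exact hr0) (by rw [hnseq0, ← hE]; exact he0)
  refine ⟨fun m hm1 hmM => (hE _).symm ▸ hmid m hm1 (by omega), ?_⟩
  rw [hE, ← hnseqM]
  exact hlast.trans_eq (by rw [errorIncrement]; ring)

/-- Convergence of the multi-level projected Newton method (Theorem 3.1, explicit
form). The `m`-th frequency sub-interval consists of the indices `nseq (m-1), …, nseq m`
and uses the regularization parameter `αs m`; `c₀(β) = 4ε/(3 d₃ (9 d₁ + √β))`. -/
theorem stmt_17 {X Y : Type*}
    [NormedAddCommGroup X] [InnerProductSpace ℝ X] [CompleteSpace X]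
    [NormedAddCommGroup Y] [InnerProductSpace ℝ Y] [CompleteSpace Y]
    (N M : ℕ) (hN : 1 ≤ N) (hM : 1 ≤ M)
    (kl Δk : ℝ) (hΔk : 0 < Δk)
    (k : ℕ → ℝ) (hk : ∀ n : ℕ, k n = kl + n * Δk)
    (Xs : ℕ → Submodule ℝ X)
    (hXsclosed : ∀ n, n ≤ N → IsClosed ((Xs n : Set X)))
    (hXsmono : ∀ n, n < N → Xs n ≤ Xs (n + 1))
    (P : ℕ → X →L[ℝ] X)
    (hP : ∀ n, n ≤ N → ∀ x : X, P n x ∈ Xs n ∧ x - P n x ∈ (Xs n)ᗮ)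
    (F : X × ℝ → Y) (hF : ContDiff ℝ 2 F)
    (d₀ d₁ d₂ d₃ d₄ : ℝ) (hd₀ : 1 ≤ d₀) (hd₁ : 0 < d₁) (hd₂ : 0 < d₂)
    (hd₃ : 0 < d₃) (hd₄ : 0 < d₄)
    (hFr : ∀ (r : X) (κ : ℝ), ‖fderiv ℝ (fun r' => F (r', κ)) r‖ ≤ d₁)
    (hFk : ∀ (r : X) (κ : ℝ), ‖deriv (fun κ' => F (r, κ')) κ‖ ≤ d₂)
    (hFrr : ∀ (r : X) (κ : ℝ),
      ‖fderiv ℝ (fun r' => fderiv ℝ (fun r'' => F (r'', κ)) r') r‖ ≤ d₃)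
    (hFkr : ∀ (r : X) (κ : ℝ),
      ‖deriv (fun κ' => fderiv ℝ (fun r' => F (r', κ')) r) κ‖ ≤ d₄)
    (rt : ℕ → X)
    (hrtmem : ∀ n, n ≤ N → rt n ∈ Xs n)
    (hrtzero : ∀ n, n ≤ N → F (rt n, k n) = 0)
    (hrtstep : ∀ n, n < N → ‖rt (n + 1) - rt n‖ ≤ d₀ * Δk)
    (δt : ℝ) (hδt : 0 ≤ δt)
    (f : ℕ → Y) (hf : ∀ n, 1 ≤ n → n ≤ N → ‖f n‖ ≤ δt)
    (ε : ℝ) (hε0 : 0 < ε) (hε1 : ε < 3 / (2 + d₀))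
    (q b : ℝ) (hqdef : q = ε * (1 + d₀) / 3) (hbdef : b = ε * (2 + d₀) / 3)
    (c₀ : ℝ → ℝ) (hc₀ : ∀ β : ℝ, c₀ β = 4 * ε / (3 * d₃ * (9 * d₁ + Real.sqrt β)))
    -- the partition of the frequency indices into `M` sub-intervals
    (nseq : ℕ → ℕ) (hnseq0 : nseq 0 = 0) (hnseqM : nseq M = N)
    (hnseqmono : ∀ m, m < M → nseq m < nseq (m + 1))
    -- lower bounds of the singular values on each sub-interval
    (σh : ℕ → ℝ) (hσh : ∀ m, 1 ≤ m → m ≤ M → 0 < σh m)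
    (hlow : ∀ m, 1 ≤ m → m ≤ M → ∀ n, nseq (m - 1) ≤ n → n ≤ nseq m → ∀ x : X,
      σh m * ‖x‖ ≤ ‖fderiv ℝ (fun r' => F (r', k n)) (rt n) x‖)
    -- the regularization parameters
    (αs : ℕ → ℝ) (α : ℝ) (hα : 0 < α) (hααsM : α ≤ αs M)
    (hαsmono : ∀ m, 1 ≤ m → m < M → αs (m + 1) ≤ αs m)
    (hαsle : ∀ m, 1 ≤ m → m ≤ M → αs m ≤ ε * σh m ^ 2 / (3 - ε))
    -- step-size and noise conditions at the smallest parameter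
    (hstep1 : 9 * d₁ * d₄ / (4 * α) * Δk ≤ ε / 3)
    (hstep2 : Δk * (d₀ + d₂ / (2 * Real.sqrt α)) ≤
      1 / 2 * (1 - b) * d₀ * c₀ α * α)
    (hstep3 : δt / (2 * Real.sqrt α) ≤ 1 / 2 * (1 - b) * d₀ * c₀ α * α) :
    ∃ J₀ : ℕ, 0 < J₀ ∧ ∀ J : ℕ, J₀ ≤ J →
      ∀ (r : ℕ → X) (rr : ℕ → ℕ → X)
        (A : ℕ → ℕ → X →L[ℝ] Y) (B : ℕ → ℕ → X →L[ℝ] X),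
      (∀ n, n < N → ∀ j, j < J →
        A n j = fderiv ℝ (fun r' => F (r', k (n + 1))) (rr n j)) →
      (∀ m, 1 ≤ m → m ≤ M → ∀ n, nseq (m - 1) ≤ n → n < nseq m → ∀ j, j < J →
        B n j ∘L (αs m • (1 : X →L[ℝ] X) +
          ContinuousLinearMap.adjoint (A n j) ∘L A n j) = 1 ∧
        (αs m • (1 : X →L[ℝ] X) +
          ContinuousLinearMap.adjoint (A n j) ∘L A n j) ∘L B n j = 1) →
      (∀ n, n < N → rr n 0 = r n) →
      (∀ m, 1 ≤ m → m ≤ M → ∀ n, nseq (m - 1) ≤ n → n < nseq m → ∀ j, j < J →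
        rr n (j + 1) = rr n j - P (n + 1)
          ((B n j ∘L ContinuousLinearMap.adjoint (A n j))
            (F (rr n j, k (n + 1)) + f (n + 1)))) →
      (∀ n, n < N → r (n + 1) = rr n J) →
      r 0 ∈ Xs 0 →
      ‖rt 0 - r 0‖ ≤ d₀ * c₀ (αs 1) * αs 1 →
      (∀ m, 1 ≤ m → m ≤ M - 1 →
        ‖rt (nseq m) - r (nseq m)‖ ≤ d₀ * c₀ (αs (m + 1)) * αs (m + 1)) ∧
      ‖rt N - r N‖ ≤
        (δt / (2 * Real.sqrt (αs M) * (1 - q)) +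
          q ^ (J - 1) * Δk * (d₀ + d₂ / (2 * Real.sqrt (αs M)))) /
          (1 - q ^ (J - 1) * b) +
        (q ^ (J - 1) * b) ^ (N - nseq (M - 1)) * (d₀ * c₀ (αs M) * αs M) :=
  stmt_17_general N M hM Δk hΔk k Xs hXsmono P hP F hF d₀ d₁ d₂ d₃ hd₀ hd₁ hd₂ hd₃ hFr hFrr rt
    hrtmem hrtzero hrtstep δt hδt f hf ε hε0 hε1 q b hqdef hbdef c₀ hc₀ nseq hnseq0 hnseqM hnseqmono
    σh hσh hlow αs α hα hααsM hαsmono hαsle hstep2 hstep3
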